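/- Let M be an m×n integer matrix with m ≥ n, ψ : ℤⁿ → ℤᵐ the map given by M, and ψ' : ℤᵐ → ℤⁿ the map given by the transpose ᵗM. Let A₁ = coker(ψ) and A₂ = coker(ψ'). Then A₁ ≅ ℤ^{m−n} ⊕ A₂ as abelian groups. -/

import Mathlib

open Matrix

/-- The "Smith diagonal" `m × n` integer matrix whose diagonal starts with the
entries of the list `d` and continues with zeros. -/
def SmithDiag (m n : ℕ) (d : List ℤ) : Matrix (Fin m) (Fin n) ℤ :=
  Matrix.of fun i j =>
    if h : (i : ℕ) = (j : ℕ) ∧ (i : ℕ) < d.length then d.get ⟨i, h.2⟩ else 0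

/-- `d` is the list of (nonzero) elementary divisors of the integer matrix `M`:
`d₁ ∣ d₂ ∣ ⋯ ∣ d_l` are all nonzero and there are `P ∈ GL(m, ℤ)`, `Q ∈ GL(n, ℤ)`
with `P * M * Q` in Smith normal form with diagonal `d` followed by zeros. -/
def ElemDivisors {m n : ℕ} (M : Matrix (Fin m) (Fin n) ℤ) (d : List ℤ) : Prop :=
  d.length ≤ min m n ∧ (∀ x ∈ d, x ≠ 0) ∧ List.Chain' (· ∣ ·) d ∧
    ∃ (P : Matrix (Fin m) (Fin m) ℤ) (Q : Matrix (Fin n) (Fin n) ℤ),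
      IsUnit P.det ∧ IsUnit Q.det ∧ P * M * Q = SmithDiag m n d

/-!
Bring `M` to Smith normal form: `P * M * Q = D` with `P`, `Q` invertible and `D` the `m × n`
matrix with `d₁, …, d_r` on its diagonal and zeros elsewhere. Transposing gives
`Qᵀ * Mᵀ * Pᵀ = Dᵀ`, again a Smith diagonal matrix with the same diagonal, and invertible factors
do not change cokernels. So `coker M ≅ ∏_{i < m} ℤ/dᵢ` and `coker Mᵀ ≅ ∏_{i < n} ℤ/dᵢ` with `dᵢ = 0`
for `i ≥ r`, and since `r ≤ n` the `m - n` extra factors of the first product are copies of `ℤ`.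
-/

open Module

theorem LinearMap.exists_bases_smithNormalForm {R M N ι κ : Type*} [CommRing R] [IsDomain R]
    [IsPrincipalIdealRing R] [AddCommGroup M] [Module R M] [AddCommGroup N] [Module R N]
    [Finite ι] [Finite κ] (f : N →ₗ[R] M) (bM : Basis ι R M) (bN : Basis κ R N) :
    ∃ (r k : ℕ) (b : Basis (Fin r ⊕ Fin k) R N) (c : Basis ι R M) (e : Fin r ↪ ι) (a : Fin r → R),
      (∀ j, f (b (.inl j)) = a j • c (e j)) ∧ ∀ l, f (b (.inr l)) = 0 := by
  -- The range is free, so `f` splits off its kernel: lifts of a Smith basis of the range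
  -- together with a basis of the kernel form a basis of `N`.
  obtain ⟨r, snf⟩ := (LinearMap.range f).smithNormalForm bM
  obtain ⟨k, bK⟩ := (LinearMap.ker f).basisOfPid bN
  have : Module.Projective R (LinearMap.range f) := .of_basis snf.bN
  obtain ⟨s, hs⟩ := f.rangeRestrict.exists_rightInverse_of_surjective f.range_rangeRestrict
  have hexact : Function.Exact (LinearMap.ker f).subtype f.rangeRestrict :=
    LinearMap.exact_iff.mpr (by simp)
  obtain ⟨e, -, he⟩ := hexact.splitSurjectiveEquiv (Submodule.injective_subtype _) ⟨s, hs⟩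
  have hf : ∀ x, f (e.symm x) = x.2 := fun x => by
    simpa using congr(($he (e.symm x) : M))
  refine ⟨r, k, (snf.bN.prod bK).map (e.trans (LinearEquiv.prodComm R _ _)).symm, snf.bM, snf.f,
    snf.a, fun j => ?_, fun l => ?_⟩
  · simp [hf, snf.snf]
  · simp [hf]

section MatrixCoker

variable {R ι κ : Type*} [CommRing R] [Fintype κ] [DecidableEq κ]

abbrev Matrix.coker (A : Matrix ι κ R) : Type _ := (ι → R) ⧸ LinearMap.range A.mulVecLin

theorem Matrix.range_mulVecLin_mul_of_isUnit (A : Matrix ι κ R) {Q : Matrix κ κ R}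
    (hQ : IsUnit Q) : LinearMap.range (A * Q).mulVecLin = LinearMap.range A.mulVecLin := by
  rw [mulVecLin_mul, LinearMap.range_comp_of_range_eq_top]
  exact LinearMap.range_eq_top.mpr (mulVec_surjective_iff_isUnit.mpr hQ)

variable [Fintype ι] [DecidableEq ι]

noncomputable def Matrix.cokerEquivOfIsUnit {A : Matrix ι κ R} {P : Matrix ι ι R}
    {Q : Matrix κ κ R} {B : Matrix ι κ R} (hP : IsUnit P) (hQ : IsUnit Q) (h : P * A * Q = B) :
    A.coker ≃ₗ[R] B.coker :=
  Submodule.Quotient.equiv _ _ (P.toLinearEquiv' hP.invertible) <| by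
    rw [← h, range_mulVecLin_mul_of_isUnit _ hQ, mulVecLin_mul, LinearMap.range_comp]
    rfl

end MatrixCoker

theorem smithDiag_apply (m n : ℕ) (d : List ℤ) (i : Fin m) (j : Fin n) :
    SmithDiag m n d i j = if (i : ℕ) = j then d.getD i 0 else 0 := by
  by_cases hij : (i : ℕ) = j
  · simp only [SmithDiag, of_apply, hij, true_and, if_true]
    split_ifs with h <;> simp [h]
  · simp [SmithDiag, hij]

theorem smithDiag_transpose (m n : ℕ) (d : List ℤ) : (SmithDiag m n d)ᵀ = SmithDiag n m d := by
  ext i j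
  simp only [transpose_apply, smithDiag_apply, eq_comm (a := (j : ℕ))]
  split_ifs with h <;> simp [h]

theorem smithDiag_mulVec_apply {m n : ℕ} {d : List ℤ} (v : Fin n → ℤ) (i : Fin m) :
    (SmithDiag m n d *ᵥ v) i = d.getD i 0 * if h : (i : ℕ) < n then v ⟨i, h⟩ else 0 := by
  simp only [mulVec, dotProduct, smithDiag_apply, ite_mul, zero_mul]
  split_ifs with h
  · have hi : ∀ j : Fin n, (i : ℕ) = j ↔ j = ⟨i, h⟩ := fun j => by rw [Fin.ext_iff, eq_comm]
    simp only [hi, Finset.sum_ite_eq', Finset.mem_univ, if_true]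
  · rw [mul_zero]
    exact Finset.sum_eq_zero fun j _ => if_neg fun hij => h (by omega)

theorem range_mulVecLin_smithDiag {m n : ℕ} {d : List ℤ} (hd : d.length ≤ n) :
    LinearMap.range (SmithDiag m n d).mulVecLin =
      Submodule.pi Set.univ fun i : Fin m => Ideal.span {d.getD i 0} := by
  ext w
  simp only [LinearMap.mem_range, mulVecLin_apply, Submodule.mem_pi, Set.mem_univ,
    forall_const, Ideal.mem_span_singleton]
  constructor
  · rintro ⟨v, rfl⟩ i
    rw [smithDiag_mulVec_apply]
    exact dvd_mul_right _ _
  · intro hw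
    choose c hc using hw
    refine ⟨fun j => if h : (j : ℕ) < m then c ⟨j, h⟩ else 0, funext fun i => ?_⟩
    rw [smithDiag_mulVec_apply, hc]
    by_cases hi : (i : ℕ) < n
    · rw [dif_pos hi, dif_pos (show (i : ℕ) < m from i.2)]
    · rw [dif_neg hi, List.getD_eq_default _ _ (hd.trans (not_lt.mp hi)), zero_mul, zero_mul]

noncomputable def cokerSmithDiagEquiv {m n : ℕ} {d : List ℤ} (hd : d.length ≤ n) :
    (SmithDiag m n d).coker ≃ₗ[ℤ] Π i : Fin m, ℤ ⧸ Ideal.span {d.getD i 0} :=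
  Submodule.quotEquivOfEq _ _ (range_mulVecLin_smithDiag hd) ≪≫ₗ Submodule.quotientPi _

noncomputable def piQuotientSpanSingletonFinAddEquiv {R : Type*} [CommRing R] (c : ℕ → R)
    {n k : ℕ} (hc : ∀ i, n ≤ i → c i = 0) :
    (Π i : Fin (n + k), R ⧸ Ideal.span {c i}) ≃ₗ[R]
      (Π j : Fin n, R ⧸ Ideal.span {c j}) × (Fin k → R) :=
  (LinearEquiv.piCongrLeft R (fun i : Fin (n + k) => R ⧸ Ideal.span {c i})
      finSumFinEquiv).symm ≪≫ₗ LinearEquiv.sumPiEquivProdPi R _ _ _ ≪≫ₗ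
      (LinearEquiv.refl R _).prodCongr (LinearEquiv.piCongrRight fun l =>
        Submodule.quotEquivOfEqBot _ (by simp [hc]))

theorem exists_isUnit_mul_mul_eq_smithDiag {m n : ℕ} (M : Matrix (Fin m) (Fin n) ℤ) :
    ∃ d : List ℤ, d.length ≤ min m n ∧ ∃ (P : Matrix (Fin m) (Fin m) ℤ)
      (Q : Matrix (Fin n) (Fin n) ℤ), IsUnit P ∧ IsUnit Q ∧ P * M * Q = SmithDiag m n d := by
  obtain ⟨r, k, b, c, e, a, hb, hk⟩ :=
    M.mulVecLin.exists_bases_smithNormalForm (Pi.basisFun ℤ _) (Pi.basisFun ℤ _)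
  obtain rfl : r + k = n := by simpa using (Module.finrank_eq_card_basis b).symm
  have hrm : r ≤ m := by simpa using Fintype.card_le_of_embedding e
  -- reorder `c` so that the Smith positions `e j` become the diagonal positions `j`
  obtain ⟨σ, hσ⟩ := Equiv.Perm.exists_extending_pair e (Fin.castLE hrm) e.injective
    (Fin.castLE_injective hrm)
  set b' := b.reindex finSumFinEquiv
  set c' := c.reindex σ
  have hc' : ∀ j, c' (Fin.castLE hrm j) = c (e j) := fun j => by simp [c', ← hσ]
  have hD : LinearMap.toMatrix b' c' M.mulVecLin = SmithDiag m (r + k) (List.ofFn a) := by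
    ext i j
    rw [LinearMap.toMatrix_apply, smithDiag_apply]
    refine Fin.addCases (fun j => ?_) (fun l => ?_) j
    · simp only [b', Basis.reindex_apply, finSumFinEquiv_symm_apply_castAdd, hb, ← hc', map_smul,
        Basis.repr_self, Finsupp.smul_apply, Finsupp.single_apply, Fin.val_castAdd, smul_eq_mul]
      by_cases hij : (i : ℕ) = j
      · simp [hij, Fin.ext_iff]
      · simp [hij, Fin.ext_iff, Ne.symm hij]
    · simp only [b', Basis.reindex_apply, finSumFinEquiv_symm_apply_natAdd, hk, map_zero,
        Finsupp.coe_zero, Pi.zero_apply, Fin.val_natAdd]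
      split_ifs with h
      · simp [h]
      · rfl
  have hM : LinearMap.toMatrix (Pi.basisFun ℤ _) (Pi.basisFun ℤ _) M.mulVecLin = M := by
    ext i j
    simp [LinearMap.toMatrix_apply, mulVec_single]
  refine ⟨List.ofFn a, by simp only [List.length_ofFn]; omega, c'.toMatrix (Pi.basisFun ℤ _),
    (Pi.basisFun ℤ _).toMatrix b', ?_, ?_, ?_⟩
  · let := c'.invertibleToMatrix (Pi.basisFun ℤ _); exact isUnit_of_invertible _
  · let := (Pi.basisFun ℤ _).invertibleToMatrix b'; exact isUnit_of_invertible _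
  · rw [← hD, ← basis_toMatrix_mul_linearMap_toMatrix_mul_basis_toMatrix b' (Pi.basisFun ℤ _) c'
      (Pi.basisFun ℤ _), hM]

theorem stmt4 {m n : ℕ} (M : Matrix (Fin m) (Fin n) ℤ) (hmn : n ≤ m) :
    Nonempty (((Fin m → ℤ) ⧸ LinearMap.range M.mulVecLin) ≃+
      ((Fin (m - n) → ℤ) × ((Fin n → ℤ) ⧸ LinearMap.range Mᵀ.mulVecLin))) := by
  obtain ⟨d, hd, P, Q, hP, hQ, hPMQ⟩ := exists_isUnit_mul_mul_eq_smithDiag M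
  obtain ⟨hdm, hdn⟩ := le_min_iff.mp hd
  have hPMQt : Qᵀ * Mᵀ * Pᵀ = SmithDiag n m d := by
    rw [← smithDiag_transpose, ← hPMQ]
    simp [Matrix.mul_assoc]
  have e₁ := Matrix.cokerEquivOfIsUnit hP hQ hPMQ ≪≫ₗ cokerSmithDiagEquiv hdn
  have e₂ := Matrix.cokerEquivOfIsUnit ((isUnit_transpose Q).mpr hQ) ((isUnit_transpose P).mpr hP)
    hPMQt ≪≫ₗ cokerSmithDiagEquiv hdm
  obtain ⟨k, rfl⟩ := Nat.exists_eq_add_of_le hmn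
  rw [Nat.add_sub_cancel_left]
  have hd₀ : ∀ i, n ≤ i → d.getD i 0 = 0 := fun i hi => List.getD_eq_default _ _ (hdn.trans hi)
  exact ⟨(e₁ ≪≫ₗ piQuotientSpanSingletonFinAddEquiv (fun i => d.getD i 0) hd₀ ≪≫ₗ
    LinearEquiv.prodComm ℤ _ _ ≪≫ₗ (LinearEquiv.refl ℤ _).prodCongr e₂.symm).toAddEquiv⟩
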